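/- Let (O; Δ₁,…,Δ_N; n₁,…,n_N) be a triangulated object in ℝ³ such that O is convex, and let ρ : ∂O → (0,1] be measurable with respect to ℋ² restricted to ∂O, with ρ⋆ = sup_{x∈∂O} ρ(x). Then for all u, u' ∈ S² with ‖u − u'‖₂ ≤ √2, the (lower Lebesgue) integral satisfies ∫_{∂O} (D̄[u](x) − D̄[u'](x))² dℋ²(x) ≤ ρ⋆²·ℋ²(∂O)·‖u − u'‖₂². -/

import Mathlib

open MeasureTheory
open scoped Classical
open scoped RealInnerProductSpace

/-- A point in ℝ³ (Euclidean). -/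
abbrev E3 : Type := EuclideanSpace ℝ (Fin 3)

/-- A triangulated object: a compact set `O ⊆ ℝ³` whose topological boundary is the union of
`N` triangles (each the convex hull of three affinely independent points), where two distinct
triangles intersect in the empty set, a common vertex, or a common edge, and each face carries
a unit normal orthogonal to the face. -/
structure TriangulatedObject (N : ℕ) where
  carrier : Set E3
  isCompact : IsCompact carrier
  v : Fin N → Fin 3 → E3
  indep : ∀ i, AffineIndependent ℝ (v i)
  normal : Fin N → E3
  normal_unit : ∀ i, ‖normal i‖ = 1
  normal_orth : ∀ i k₁ k₂, (inner ℝ (normal i) (v i k₁ - v i k₂) : ℝ) = 0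
  boundary_eq : frontier carrier = ⋃ i, convexHull ℝ (Set.range (v i))
  faces_inter : ∀ i j, i ≠ j →
    convexHull ℝ (Set.range (v i)) ∩ convexHull ℝ (Set.range (v j)) = ∅ ∨
    (∃ k₁ k₂, v i k₁ = v j k₂ ∧
      convexHull ℝ (Set.range (v i)) ∩ convexHull ℝ (Set.range (v j)) = {v i k₁}) ∨
    (∃ k₁ k₁' k₂ k₂', k₁ ≠ k₁' ∧ v i k₁ = v j k₂ ∧ v i k₁' = v j k₂' ∧
      convexHull ℝ (Set.range (v i)) ∩ convexHull ℝ (Set.range (v j))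
        = segment ℝ (v i k₁) (v i k₁'))

namespace TriangulatedObject

variable {N : ℕ}

/-- The `i`-th face Δᵢ. -/
def face (T : TriangulatedObject N) (i : Fin N) : Set E3 :=
  convexHull ℝ (Set.range (T.v i))

/-- The set `E` of edge points: union of all edges of all faces. -/
def edges (T : TriangulatedObject N) : Set E3 :=
  ⋃ i, ⋃ k₁, ⋃ k₂, ⋃ (_ : k₁ ≠ k₂), segment ℝ (T.v i k₁) (T.v i k₂)

/-- The boundary ∂O of the object. -/
def bdry (T : TriangulatedObject N) : Set E3 := frontier T.carrier

/-- The set Φ = ∂O \ E of face-interior points. -/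
def Phi (T : TriangulatedObject N) : Set E3 := T.bdry \ T.edges

/-- The outward normal at a boundary point: the normal of (the) face containing `x`
(for `x ∈ Φ` this face is unique); junk value `0` off the faces. -/
noncomputable def normalAt (T : TriangulatedObject N) (x : E3) : E3 :=
  if h : ∃ i, x ∈ T.face i then T.normal h.choose else 0

/-- The point-direction visibility indicator ν(x,u): 1 if the ray from `x` in direction `u`
meets `O` only at `x`, else 0. -/
noncomputable def vis (T : TriangulatedObject N) (x u : E3) : ℝ :=
  if {p : E3 | ∃ t : ℝ, 0 ≤ t ∧ p = x + t • u} ∩ T.carrier = {x} then 1 else 0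

/-- The direct point-illumination irradiance D̄[u](x) = ρ(x)·⟨n(x),u⟩₊·ν(x,u) on Φ, 0 on E. -/
noncomputable def Dbar (T : TriangulatedObject N) (ρ : E3 → ℝ) (u x : E3) : ℝ :=
  if x ∈ T.Phi then ρ x * max (inner ℝ (T.normalAt x) u : ℝ) 0 * T.vis x u else 0

/-- The shadowed region S[u] ⊆ ∂O. -/
def shadow (T : TriangulatedObject N) (ρ : E3 → ℝ) (u : E3) : Set E3 :=
  {x ∈ T.bdry | T.Dbar ρ u x = 0}

end TriangulatedObject

/-!
At a face-interior point `x` with normal `n`, the factor `max ⟪n, u⟫ 0 * ν(x, u)` is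
1-Lipschitz in `u`. If both directions are visible this is `|max a 0 - max b 0| ≤ |a - b|`.
The only other nonzero case is `u` visible with `⟪n, u⟫ > 0` while `x + t • u' ∈ O` for some
`t > 0`; convexity then forces `⟪n, u'⟫ ≤ 0`. Otherwise `u = w + γ • u'` with `γ > 0` and `w`
parallel to the face; as `x` lies in the relative interior of its face, `x + ε • w ∈ O`, and a
convex combination of `x + ε • w` and `x + t • u'` lands on the open ray `x + ℝ₊ • u`, contradicting
visibility. Integrating the resulting pointwise bound `ρ(x)² ‖u - u'‖²` over `∂O` gives the claim.
-/

open Set Filter Topology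

section ConvexGeometry

variable {V : Type*} [AddCommGroup V] [Module ℝ V] {ι : Type*}

lemma exists_pos_forall_add_mul_pos [Finite ι] {c : ι → ℝ} (hc : ∀ k, 0 < c k) (d : ι → ℝ) :
    ∃ ε > 0, ∀ k, 0 < c k + ε * d k := by
  have h : ∀ᶠ ε in 𝓝[>] (0 : ℝ), ∀ k, 0 < c k + ε * d k :=
    eventually_all.2 fun k => nhdsWithin_le_nhds <|
      ((continuous_const.add (continuous_id.mul continuous_const)).tendsto' 0 (c k)
        (by simp)).eventually (lt_mem_nhds (hc k))
  exact (h.and self_mem_nhdsWithin).exists.imp fun ε h => ⟨h.2, h.1⟩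

lemma exists_sum_eq_zero_of_mem_vectorSpan {k : Type*} [Ring k] {W : Type*} [AddCommGroup W]
    [Module k W] [Fintype ι] {p : ι → W} {w : W} (hw : w ∈ vectorSpan k (range p)) :
    ∃ d : ι → k, ∑ j, d j = 0 ∧ ∑ j, d j • p j = w := by
  classical
  obtain ⟨s, d, hd, rfl⟩ := (mem_vectorSpan_iff_eq_weightedVSub k).1 hw
  have hsum : ∑ j, Set.indicator (↑s) d j = 0 := by
    rwa [Finset.sum_indicator_subset _ (Finset.subset_univ s)]
  refine ⟨Set.indicator (↑s) d, hsum, ?_⟩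
  rw [Finset.weightedVSub_indicator_subset _ _ (Finset.subset_univ s),
    Finset.weightedVSub_eq_linear_combination _ hsum]

lemma exists_nonneg_weights_of_mem_convexHull_range [Fintype ι] {p : ι → V} {x : V}
    (hx : x ∈ convexHull ℝ (range p)) :
    ∃ c : ι → ℝ, (∀ k, 0 ≤ c k) ∧ ∑ k, c k = 1 ∧ ∑ k, c k • p k = x := by
  classical
  rw [convexHull_range_eq_exists_affineCombination] at hx
  obtain ⟨s, w, hw0, hw1, rfl⟩ := hx
  have hsum : ∑ k, Set.indicator (↑s) w k = 1 := by
    rwa [Finset.sum_indicator_subset _ (Finset.subset_univ s)]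
  refine ⟨Set.indicator (↑s) w, fun k => Set.indicator_nonneg hw0 k, hsum, ?_⟩
  rw [Finset.affineCombination_indicator_subset _ _ (Finset.subset_univ s),
    Finset.affineCombination_eq_linear_combination _ _ _ hsum]

lemma exists_pos_add_smul_mem_convexHull [Fintype ι] {p : ι → V} {c : ι → ℝ}
    (hc : ∀ k, 0 < c k) (hc1 : ∑ k, c k = 1) {w : V} (hw : w ∈ vectorSpan ℝ (range p)) :
    ∃ ε > (0 : ℝ), ∑ k, c k • p k + ε • w ∈ convexHull ℝ (range p) := by
  obtain ⟨d, hd0, rfl⟩ := exists_sum_eq_zero_of_mem_vectorSpan hw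
  obtain ⟨ε, hε, hpos⟩ := exists_pos_forall_add_mul_pos hc d
  refine ⟨ε, hε, mem_convexHull_of_exists_fintype (fun k => c k + ε * d k) p
    (fun k => (hpos k).le) ?_ mem_range_self ?_⟩
  · simp [Finset.sum_add_distrib, ← Finset.mul_sum, hc1, hd0]
  · simp [add_smul, mul_smul, Finset.sum_add_distrib, Finset.smul_sum]

lemma Convex.exists_pos_add_smul_add_mem {K : Set V} (hK : Convex ℝ K) {x v w : V} {s r : ℝ}
    (hs : 0 < s) (hr : 0 < r) (hv : x + s • v ∈ K) (hw : x + r • w ∈ K) :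
    ∃ m > (0 : ℝ), x + m • (v + w) ∈ K := by
  refine ⟨s * r / (s + r), by positivity, ?_⟩
  convert hK hv hw (a := r / (s + r)) (b := s / (s + r)) (by positivity) (by positivity)
    (by field_simp; ring) using 1
  match_scalars <;> field_simp
  ring

lemma exists_pos_add_smul_mem_of_ray_inter_ne {K : Set V} {x u : V} (hx : x ∈ K)
    (h : {p : V | ∃ t : ℝ, 0 ≤ t ∧ p = x + t • u} ∩ K ≠ {x}) :
    ∃ t > (0 : ℝ), x + t • u ∈ K := by
  by_contra! H
  refine h (Set.eq_singleton_iff_unique_mem.2 ⟨⟨⟨0, le_rfl, by simp⟩, hx⟩, ?_⟩)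
  rintro _ ⟨⟨t, ht, rfl⟩, hp⟩
  rcases ht.eq_or_lt with rfl | ht
  · simp
  · exact absurd hp (H t ht)

end ConvexGeometry

lemma AffineIndependent.vectorSpan_eq_orthogonal_span_singleton {V : Type*}
    [NormedAddCommGroup V] [InnerProductSpace ℝ V] {n : ℕ}
    (hdim : Module.finrank ℝ V = n + 1) {ι : Type*} [Fintype ι] {p : ι → V}
    (hp : AffineIndependent ℝ p) (hcard : Fintype.card ι = n + 1) {ν : V} (hν : ν ≠ 0)
    (horth : ∀ a b, ⟪ν, p a - p b⟫ = 0) :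
    vectorSpan ℝ (range p) = (ℝ ∙ ν)ᗮ := by
  have : Fact (Module.finrank ℝ V = n + 1) := ⟨hdim⟩
  have := FiniteDimensional.of_fact_finrank_eq_succ (K := ℝ) (V := V) n
  refine Submodule.eq_of_le_of_finrank_eq ?_ ?_
  · rw [vectorSpan_def, Submodule.span_le]
    rintro _ ⟨_, ⟨a, rfl⟩, _, ⟨b, rfl⟩, rfl⟩
    exact Submodule.mem_orthogonal_singleton_iff_inner_right.2 (horth a b)
  · rw [hp.finrank_vectorSpan hcard, Submodule.finrank_orthogonal_span_singleton (n := n) hν]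

namespace TriangulatedObject

variable {N : ℕ} (T : TriangulatedObject N)

lemma face_subset_carrier (i : Fin N) : T.face i ⊆ T.carrier := fun _ hz =>
  T.isCompact.isClosed.frontier_subset (T.boundary_eq ▸ mem_iUnion.2 ⟨i, hz⟩)

lemma exists_mem_face_of_mem_bdry {x : E3} (hx : x ∈ T.bdry) : ∃ i, x ∈ T.face i :=
  mem_iUnion.1 (T.boundary_eq ▸ hx)

lemma vectorSpan_face_eq (i : Fin N) : vectorSpan ℝ (range (T.v i)) = (ℝ ∙ T.normal i)ᗮ :=
  (T.indep i).vectorSpan_eq_orthogonal_span_singleton (n := 2) (by simp) (by simp)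
    (norm_ne_zero_iff.1 (by simp [T.normal_unit])) (T.normal_orth i)

lemma exists_pos_weights_of_notMem_edges {i : Fin N} {x : E3} (hxi : x ∈ T.face i)
    (hx : x ∉ T.edges) :
    ∃ c : Fin 3 → ℝ, (∀ k, 0 < c k) ∧ ∑ k, c k = 1 ∧ ∑ k, c k • T.v i k = x := by
  obtain ⟨c, hc0, hc1, hcx⟩ := exists_nonneg_weights_of_mem_convexHull_range hxi
  refine ⟨c, fun k => (hc0 k).lt_of_ne fun hk => hx ?_, hc1, hcx⟩
  rw [Fin.sum_univ_three] at hc1 hcx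
  simp only [edges, mem_iUnion]
  rcases (by decide : ∀ k : Fin 3, k = 0 ∨ k = 1 ∨ k = 2) k with rfl | rfl | rfl
  · exact ⟨i, 1, 2, by decide, c 1, c 2, hc0 1, hc0 2, by linarith,
      by rw [← hcx, ← hk]; simp⟩
  · exact ⟨i, 0, 2, by decide, c 0, c 2, hc0 0, hc0 2, by linarith,
      by rw [← hcx, ← hk]; simp⟩
  · exact ⟨i, 0, 1, by decide, c 0, c 1, hc0 0, hc0 1, by linarith,
      by rw [← hcx, ← hk]; simp⟩

lemma inner_normal_nonpos_of_visible (hconv : Convex ℝ T.carrier) {i : Fin N} {x : E3}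
    (hxi : x ∈ T.face i) (hx : x ∉ T.edges) {u u' : E3}
    (hvis : {p : E3 | ∃ t : ℝ, 0 ≤ t ∧ p = x + t • u} ∩ T.carrier = {x})
    (hnu : 0 < ⟪T.normal i, u⟫) {t : ℝ} (ht : 0 < t) (hy : x + t • u' ∈ T.carrier) :
    ⟪T.normal i, u'⟫ ≤ 0 := by
  by_contra! hnu'
  set γ := ⟪T.normal i, u⟫ / ⟪T.normal i, u'⟫
  have hγ : 0 < γ := div_pos hnu hnu'
  have hw : u - γ • u' ∈ vectorSpan ℝ (range (T.v i)) := by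
    rw [T.vectorSpan_face_eq, Submodule.mem_orthogonal_singleton_iff_inner_right,
      inner_sub_right, real_inner_smul_right, div_mul_cancel₀ _ hnu'.ne', sub_self]
  obtain ⟨c, hc, hc1, hcx⟩ := T.exists_pos_weights_of_notMem_edges hxi hx
  obtain ⟨ε, hε, hεw⟩ := exists_pos_add_smul_mem_convexHull hc hc1 hw
  rw [hcx] at hεw
  have hy' : x + (t / γ) • (γ • u') ∈ T.carrier := by
    rwa [smul_smul, div_mul_cancel₀ _ hγ.ne']
  obtain ⟨m, hm, hmem⟩ :=
    hconv.exists_pos_add_smul_add_mem hε (div_pos ht hγ) (T.face_subset_carrier i hεw) hy'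
  rw [sub_add_cancel] at hmem
  have hxmu : x + m • u ∈ ({x} : Set E3) := hvis ▸ ⟨⟨m, hm.le, rfl⟩, hmem⟩
  simp [hm.ne'] at hxmu
  simp [hxmu] at hnu

lemma max_inner_normal_le_of_visible_of_not_visible (hconv : Convex ℝ T.carrier) {i : Fin N}
    {x : E3} (hxi : x ∈ T.face i) (hx : x ∉ T.edges) {u u' : E3}
    (hvis : {p : E3 | ∃ t : ℝ, 0 ≤ t ∧ p = x + t • u} ∩ T.carrier = {x})
    (hvis' : {p : E3 | ∃ t : ℝ, 0 ≤ t ∧ p = x + t • u'} ∩ T.carrier ≠ {x}) :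
    max ⟪T.normal i, u⟫ 0 ≤ ‖u - u'‖ := by
  rcases le_or_gt ⟪T.normal i, u⟫ 0 with hnu | hnu
  · exact (max_eq_right hnu).trans_le (norm_nonneg _)
  obtain ⟨t, ht, hy⟩ :=
    exists_pos_add_smul_mem_of_ray_inter_ne (T.face_subset_carrier i hxi) hvis'
  have hnu' := T.inner_normal_nonpos_of_visible hconv hxi hx hvis hnu ht hy
  calc max ⟪T.normal i, u⟫ 0 = ⟪T.normal i, u⟫ := max_eq_left hnu.le
    _ ≤ ⟪T.normal i, u - u'⟫ := by rw [inner_sub_right]; linarith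
    _ ≤ ‖u - u'‖ := by simpa [T.normal_unit] using real_inner_le_norm (T.normal i) (u - u')

lemma abs_max_inner_normal_mul_vis_sub_le (hconv : Convex ℝ T.carrier) {i : Fin N} {x : E3}
    (hxi : x ∈ T.face i) (hx : x ∉ T.edges) (u u' : E3) :
    |max ⟪T.normal i, u⟫ 0 * T.vis x u - max ⟪T.normal i, u'⟫ 0 * T.vis x u'| ≤ ‖u - u'‖ := by
  unfold vis
  split_ifs with hvis hvis' hvis'
  · simp only [mul_one]
    refine (abs_max_sub_max_le_abs _ _ _).trans ?_
    simpa [← inner_sub_right, T.normal_unit] using abs_real_inner_le_norm (T.normal i) (u - u')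
  · rw [mul_one, mul_zero, sub_zero, abs_of_nonneg (le_max_right _ _)]
    exact T.max_inner_normal_le_of_visible_of_not_visible hconv hxi hx hvis hvis'
  · rw [mul_one, mul_zero, zero_sub, abs_neg, abs_of_nonneg (le_max_right _ _), norm_sub_rev]
    exact T.max_inner_normal_le_of_visible_of_not_visible hconv hxi hx hvis' hvis
  · simp

lemma sq_Dbar_sub_le (hconv : Convex ℝ T.carrier) (ρ : E3 → ℝ) {x : E3} (hx : x ∈ T.bdry)
    (u u' : E3) : (T.Dbar ρ u x - T.Dbar ρ u' x) ^ 2 ≤ ρ x ^ 2 * ‖u - u'‖ ^ 2 := by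
  unfold Dbar
  split_ifs with hΦ
  · have hex := T.exists_mem_face_of_mem_bdry hx
    rw [normalAt, dif_pos hex]
    set i := hex.choose
    calc _ = ρ x ^ 2 * |max ⟪T.normal i, u⟫ 0 * T.vis x u
          - max ⟪T.normal i, u'⟫ 0 * T.vis x u'| ^ 2 := by rw [sq_abs]; ring
      _ ≤ ρ x ^ 2 * ‖u - u'‖ ^ 2 := by
        gcongr
        exact T.abs_max_inner_normal_mul_vis_sub_le hconv hex.choose_spec hΦ.2 u u'
  · rw [sub_self, zero_pow two_ne_zero]
    positivity

end TriangulatedObject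

theorem stmt10_general {N : ℕ} (T : TriangulatedObject N) (hconv : Convex ℝ T.carrier)
    (ρ : E3 → ℝ)
    (hρ : ∀ x ∈ T.bdry, 0 < ρ x ∧ ρ x ≤ 1)
    (u u' : E3) :
    (∫⁻ x in T.bdry, ENNReal.ofReal ((T.Dbar ρ u x - T.Dbar ρ u' x) ^ 2) ∂(μH[2] : Measure E3))
      ≤ ENNReal.ofReal ((⨆ x : T.bdry, ρ (x : E3)) ^ 2 * ‖u - u'‖ ^ 2)
          * (μH[2] : Measure E3) T.bdry := by
  have hbdd : BddAbove (range fun x : T.bdry => ρ x) :=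
    ⟨1, by rintro _ ⟨x, rfl⟩; exact (hρ x x.2).2⟩
  have hpt : ∀ x ∈ T.bdry, ENNReal.ofReal ((T.Dbar ρ u x - T.Dbar ρ u' x) ^ 2)
      ≤ ENNReal.ofReal ((⨆ x : T.bdry, ρ (x : E3)) ^ 2 * ‖u - u'‖ ^ 2) := fun x hx => by
    refine ENNReal.ofReal_le_ofReal ((T.sq_Dbar_sub_le hconv ρ hx u u').trans ?_)
    gcongr
    exacts [(hρ x hx).1.le, le_ciSup hbdd ⟨x, hx⟩]
  exact (setLIntegral_mono' isClosed_frontier.measurableSet hpt).trans_eq (setLIntegral_const _ _)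

theorem stmt10 {N : ℕ} (T : TriangulatedObject N) (hconv : Convex ℝ T.carrier)
    (ρ : E3 → ℝ)
    (hρ : ∀ x ∈ T.bdry, 0 < ρ x ∧ ρ x ≤ 1)
    (hρmeas : AEMeasurable ρ ((μH[2] : Measure E3).restrict T.bdry))
    (u u' : E3) (hu : ‖u‖ = 1) (hu' : ‖u'‖ = 1) (hclose : ‖u - u'‖ ≤ Real.sqrt 2) :
    (∫⁻ x in T.bdry, ENNReal.ofReal ((T.Dbar ρ u x - T.Dbar ρ u' x) ^ 2) ∂(μH[2] : Measure E3))
      ≤ ENNReal.ofReal ((⨆ x : T.bdry, ρ (x : E3)) ^ 2 * ‖u - u'‖ ^ 2)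
          * (μH[2] : Measure E3) T.bdry :=
  stmt10_general T hconv ρ hρ u u'
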